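/- Let n be a positive integer, let a_1,...,a_n have weights 2^1,...,2^n and profits p_1,...,p_n ≥ 0, and let b have weight 2^{n+1} and profit q. Suppose the Pareto set of K({a_1,...,a_n}) is P and q > Σ_{i=1}^n p_i. Then a solution (s,1) ∈ {0,1}^n × {1} is Pareto optimal for K({a_1,...,a_n, b}) if and only if s ∈ P, and a solution (s,0) is Pareto optimal for K({a_1,...,a_n, b}) if and only if s ∈ P. -/
import Mathlib


open MeasureTheory Finset

/-- Total weight (or total profit) of a 0-1 solution `s`. -/
def totalVal {ι : Type*} [Fintype ι] (w : ι → ℝ) (s : ι → Bool) : ℝ :=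
  ∑ i, if s i then w i else 0

/-- `s'` dominates `s`: it is no heavier, has no smaller profit, and is strictly
better in at least one of the two criteria. -/
def dominates {ι : Type*} [Fintype ι] (w p : ι → ℝ) (s' s : ι → Bool) : Prop :=
  totalVal w s' ≤ totalVal w s ∧ totalVal p s ≤ totalVal p s' ∧
    (totalVal w s' < totalVal w s ∨ totalVal p s < totalVal p s')

/-- Pareto set of the bi-criteria knapsack problem with solution set `S`,
weights `w` and profits `p`. -/
def paretoSet {ι : Type*} [Fintype ι] (S : Set (ι → Bool)) (w p : ι → ℝ) :
    Set (ι → Bool) :=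
  {s ∈ S | ∀ s' ∈ S, ¬ dominates w p s' s}

lemma totalVal_snoc {n : ℕ} (w : Fin n → ℝ) (c : ℝ) (s : Fin n → Bool) (b : Bool) :
    totalVal (Fin.snoc w c) (Fin.snoc s b) = totalVal w s + (if b then c else 0) := by
  simp [totalVal, Fin.sum_univ_castSucc]

lemma totalVal_nonneg {ι : Type*} [Fintype ι] {w : ι → ℝ} (hw : ∀ i, 0 ≤ w i)
    (s : ι → Bool) : 0 ≤ totalVal w s := by
  apply Finset.sum_nonneg
  intro i _
  by_cases h : s i <;> simp [h, hw i]

lemma totalVal_le_sum {ι : Type*} [Fintype ι] {w : ι → ℝ} (hw : ∀ i, 0 ≤ w i)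
    (s : ι → Bool) : totalVal w s ≤ ∑ i, w i := by
  apply Finset.sum_le_sum
  intro i _
  by_cases h : s i <;> simp [h, hw i]

lemma sum_pow_lt (n : ℕ) : ∑ i : Fin n, (2 : ℝ) ^ ((i : ℕ) + 1) < 2 ^ (n + 1) := by
  induction n with
  | zero => norm_num
  | succ n ih =>
    rw [Fin.sum_univ_castSucc]
    have : (2 : ℝ) ^ (n + 1 + 1) = 2 ^ (n + 1) + 2 ^ (n + 1) := by ring
    simp only [Fin.coe_castSucc, Fin.val_last]
    linarith

lemma snoc_pareto_iff (n : ℕ) (p : Fin n → ℝ) (hp : ∀ i, 0 ≤ p i) (q : ℝ)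
    (hq : ∑ i, p i < q) (b : Bool) (s : Fin n → Bool) :
    (Fin.snoc s b : Fin (n + 1) → Bool) ∈ paretoSet Set.univ
        (Fin.snoc (fun i : Fin n => (2 : ℝ) ^ ((i : ℕ) + 1)) ((2 : ℝ) ^ (n + 1)))
        (Fin.snoc p q)
      ↔ s ∈ paretoSet Set.univ (fun i : Fin n => (2 : ℝ) ^ ((i : ℕ) + 1)) p := by
  set w : Fin n → ℝ := fun i : Fin n => (2 : ℝ) ^ ((i : ℕ) + 1) with hw
  have hwpos : ∀ i, 0 ≤ w i := fun i => by positivity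
  constructor
  · rintro ⟨-, h⟩
    refine ⟨Set.mem_univ _, fun s' _ hd => ?_⟩
    apply h (Fin.snoc s' b) (Set.mem_univ _)
    unfold dominates at hd ⊢
    simpa only [totalVal_snoc, add_le_add_iff_right, add_lt_add_iff_right] using hd
  · rintro ⟨-, h⟩
    refine ⟨Set.mem_univ _, fun t _ hd => ?_⟩
    rw [← Fin.snoc_init_self t] at hd
    set t' : Fin n → Bool := Fin.init t with ht'
    unfold dominates at hd
    simp only [totalVal_snoc] at hd
    have hwt : totalVal w t' < 2 ^ (n + 1) :=
      lt_of_le_of_lt (totalVal_le_sum hwpos t') (sum_pow_lt n)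
    have hws : totalVal w s < 2 ^ (n + 1) :=
      lt_of_le_of_lt (totalVal_le_sum hwpos s) (sum_pow_lt n)
    have hwt0 : 0 ≤ totalVal w t' := totalVal_nonneg hwpos t'
    have hws0 : 0 ≤ totalVal w s := totalVal_nonneg hwpos s
    have hpt : totalVal p t' ≤ ∑ i, p i := totalVal_le_sum hp t'
    have hps0 : 0 ≤ totalVal p s := totalVal_nonneg hp s
    rcases Bool.eq_false_or_eq_true (t (Fin.last n)) with h' | h' <;>
        rw [h'] at hd <;> cases b <;> norm_num at hd
    all_goals
      obtain ⟨h1, h2, h3⟩ := hd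
      refine h t' (Set.mem_univ _) ?_
      unfold dominates
      refine ⟨by linarith, by linarith, ?_⟩
      rcases h3 with h3 | h3
      · exact Or.inl (by linarith)
      · exact Or.inr (by linarith)

/-- With objects `a_1,…,a_n` of weights `2^1,…,2^n` and nonnegative
profits, and `b` of weight `2^(n+1)` and profit `q > Σ p_i`, a solution `(s,1)` is
Pareto optimal for `K({a_1,…,a_n,b})` iff `s` is Pareto optimal for `K({a_1,…,a_n})`,
and likewise for `(s,0)`. -/
theorem copy_lemma_pointwise (n : ℕ) (hn : 0 < n) (p : Fin n → ℝ)
    (hp : ∀ i, 0 ≤ p i) (q : ℝ) (hq : ∑ i, p i < q)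
    (P : Set (Fin n → Bool))
    (hP : P = paretoSet Set.univ (fun i : Fin n => (2 : ℝ) ^ ((i : ℕ) + 1)) p) :
    ∀ s : Fin n → Bool,
      ((Fin.snoc s true : Fin (n + 1) → Bool) ∈ paretoSet Set.univ
          (Fin.snoc (fun i : Fin n => (2 : ℝ) ^ ((i : ℕ) + 1)) ((2 : ℝ) ^ (n + 1)))
          (Fin.snoc p q) ↔ s ∈ P) ∧
      ((Fin.snoc s false : Fin (n + 1) → Bool) ∈ paretoSet Set.univ
          (Fin.snoc (fun i : Fin n => (2 : ℝ) ^ ((i : ℕ) + 1)) ((2 : ℝ) ^ (n + 1)))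
          (Fin.snoc p q) ↔ s ∈ P) := by
  intro s
  subst hP
  exact ⟨snoc_pareto_iff n p hp q hq true s, snoc_pareto_iff n p hp q hq false s⟩
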